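/- arXiv:2204.00712 — 2 statements merged into one kernel-verified Lean document; each statement's English description precedes it below -/
import Mathlib

section
/- Geometric outgoing estimate: let ν ≥ 1 be an integer, r₀ > 0 and m > 0. If n ≥ 8r₀ and 0 < δ < m/10, then for all x, p ∈ ℝ^ν with ‖x‖ > n, ‖p‖ > m and ⟨x,p⟩ ≥ 0, all t ≥ 0, all y ∈ ℝ^ν with ‖y‖ ≤ r₀, and all ξ ∈ ℝ^ν with ‖ξ − p‖ ≤ 2δ, one has ‖x + tξ − y‖ ≥ (1/16)(‖x‖ + n + t‖p‖). -/
open MeasureTheory Filter Complex SchwartzMap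
open scoped Topology ENNReal NNReal

notation "⟪" x ", " y "⟫_ℝ" => @inner ℝ _ _ x y
notation "⟪" x ", " y "⟫_ℂ" => @inner ℂ _ _ x y

noncomputable section

abbrev Ed (n : ℕ) : Type := EuclideanSpace ℝ (Fin n)
abbrev HL2 (n : ℕ) : Type := MeasureTheory.Lp ℂ 2 (volume : Measure (Ed n))

/-- The projection onto the last `d - k` ("transverse") coordinates. -/
def perpL (d k : ℕ) : Ed d →ₗ[ℝ] Ed (d - k) where
  toFun x := WithLp.toLp 2 (fun i : Fin (d - k) => x ⟨k + i.1, by have := i.2; omega⟩)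
  map_add' x y := rfl
  map_smul' c x := rfl

def perp (d k : ℕ) (x : Ed d) : Ed (d - k) := perpL d k x

/-- The projection onto the first `k` ("longitudinal") coordinates. -/
def para (d k : ℕ) (h : k ≤ d) (x : Ed d) : Ed k := WithLp.toLp 2 (fun i => x (Fin.castLE h i))

lemma perp_continuous (d k : ℕ) : Continuous (perp d k) :=
  (perpL d k).continuous_of_finiteDimensional

/-- The slab `S_R = {x : ‖x⊥‖ ≤ R}`. -/
def Slab (d k : ℕ) (R : ℝ) : Set (Ed d) := {x | ‖perp d k x‖ ≤ R}

lemma slab_meas (d k : ℕ) (R : ℝ) : MeasurableSet (Slab d k R) :=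
  (isClosed_le (continuous_norm.comp (perp_continuous d k)) continuous_const).measurableSet

/-- Multiplication of an `L²` function by the indicator of a measurable set. -/
def indLp (n : ℕ) (A : Set (Ed n)) (hA : MeasurableSet A) (ψ : HL2 n) : HL2 n :=
  ((MeasureTheory.Lp.memLp ψ).indicator hA).toLp _

/-- The (pointwise) Laplacian of a function on `ℝ^n`. -/
def lap (n : ℕ) (f : Ed n → ℂ) (x : Ed n) : ℂ :=
  ∑ i : Fin n, fderiv ℝ (fun y => fderiv ℝ f y (EuclideanSpace.single i 1)) x
    (EuclideanSpace.single i 1)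

lemma schwartz_memℒp (n : ℕ) (f : 𝓢(Ed n, ℂ)) : MemLp (⇑f) 2 (volume : Measure (Ed n)) := by
  rw [memLp_two_iff_integrable_sq_norm f.continuous.aestronglyMeasurable]
  obtain ⟨C, hC0, hC⟩ := f.decay 0 0
  have hbd : ∀ x : Ed n, ‖f x‖ ≤ C := by
    intro x
    have := hC x
    simpa [norm_iteratedFDeriv_zero] using this
  have h1 : Integrable (fun x : Ed n => C * ‖f x‖) volume :=
    ((f.integrable (μ := volume)).norm.const_mul C)
  refine h1.mono' ?_ ?_
  · exact (f.continuous.norm.pow 2).aestronglyMeasurable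
  · refine Eventually.of_forall fun x => ?_
    have : ‖f x‖ ^ 2 ≤ C * ‖f x‖ := by
      have := mul_le_mul_of_nonneg_right (hbd x) (norm_nonneg (f x))
      simpa [pow_two] using this
    simpa [_root_.abs_of_nonneg (sq_nonneg ‖f x‖)] using this

/-- A Schwartz function as an element of `L²`. -/
def schToLp (n : ℕ) (f : 𝓢(Ed n, ℂ)) : HL2 n := (schwartz_memℒp n f).toLp _

/-- A strongly continuous one-parameter unitary group. -/
def IsUnitaryGroup (n : ℕ) (U : ℝ → (HL2 n →L[ℂ] HL2 n)) : Prop :=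
  U 0 = 1 ∧ (∀ s t : ℝ, U (s + t) = (U s).comp (U t)) ∧
    (∀ (t : ℝ) (ψ : HL2 n), ‖U t ψ‖ = ‖ψ‖) ∧ (∀ ψ : HL2 n, Continuous fun t : ℝ => U t ψ)

/-- `U₀` is the free Schrödinger group `e^{-itH₀}`, `H₀ = -Δ`: it is a strongly continuous
unitary group whose weak generator on Schwartz functions is `iΔ`. -/
def IsFreeSchrodingerGroup (n : ℕ) (U₀ : ℝ → (HL2 n →L[ℂ] HL2 n)) : Prop :=
  IsUnitaryGroup n U₀ ∧ ∀ φ ψ : 𝓢(Ed n, ℂ),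
    HasDerivAt (fun t : ℝ => (⟪schToLp n φ, U₀ t (schToLp n ψ)⟫_ℂ))
      (∫ x : Ed n, (starRingEnd ℂ) (φ x) * (Complex.I * lap n (⇑ψ) x)) 0

/-- `U` is the Schrödinger group `e^{-itH}` with `H = -Δ + V`: it is a strongly continuous
unitary group whose weak generator on Schwartz functions is `i(Δ - V)`. -/
def IsSchrodingerGroup (n : ℕ) (V : Ed n → ℝ) (U : ℝ → (HL2 n →L[ℂ] HL2 n)) : Prop :=
  IsUnitaryGroup n U ∧ ∀ φ ψ : 𝓢(Ed n, ℂ),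
    HasDerivAt (fun t : ℝ => (⟪schToLp n φ, U t (schToLp n ψ)⟫_ℂ))
      (∫ x : Ed n, (starRingEnd ℂ) (φ x) * (Complex.I * (lap n (⇑ψ) x - (V x : ℂ) * ψ x))) 0

/-- The `L²`-normalized dilation `η_δ(y) = δ^{n/2} η(δ y)`, i.e. `η̂_δ(p) = δ^{-n/2} η̂(p/δ)`. -/
def etaDil (n : ℕ) (η : 𝓢(Ed n, ℂ)) (δ : ℝ) (y : Ed n) : ℂ :=
  ((δ ^ ((n : ℝ) / 2) : ℝ) : ℂ) * η (δ • y)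

/-- The coherent state `η_{x,p;δ}(y) = e^{ip·(y-x)} η_δ(y-x)`. -/
def coh (n : ℕ) (η : 𝓢(Ed n, ℂ)) (δ : ℝ) (x p y : Ed n) : ℂ :=
  Complex.exp (Complex.I * ((⟪p, y - x⟫_ℝ : ℝ) : ℂ)) * etaDil n η δ (y - x)

/-- The Fourier transform with the convention `f̂(ξ) = (2π)^{-n/2} ∫ f(x) e^{-ix·ξ} dx`. -/
def fourierP (n : ℕ) (f : Ed n → ℂ) (ξ : Ed n) : ℂ :=
  (((2 * Real.pi) ^ ((n : ℝ) / 2) : ℝ) : ℂ)⁻¹ *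
    ∫ x : Ed n, Complex.exp (-(Complex.I * ((⟪x, ξ⟫_ℝ : ℝ) : ℂ))) * f x

/-- `η` is normalized in `L²` and has Fourier transform supported in the unit ball. -/
def GoodEta (n : ℕ) (η : 𝓢(Ed n, ℂ)) : Prop :=
  (∫ y : Ed n, ‖η y‖ ^ 2) = 1 ∧ ∀ ξ : Ed n, 1 < ‖ξ‖ → fourierP n (⇑η) ξ = 0

/-- `P` is the family of phase-space observables built from `η`:
`⟨φ, P_δ(E) ψ⟩ = (2π)^{-n} ∬_E ⟨η_{x,p;δ}, ψ⟩ ⟨φ, η_{x,p;δ}⟩ dx dp`. -/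
def IsPhaseObs (n : ℕ) (η : 𝓢(Ed n, ℂ))
    (P : ℝ → Set (Ed n × Ed n) → (HL2 n →L[ℂ] HL2 n)) : Prop :=
  ∀ δ : ℝ, 0 < δ → ∀ E : Set (Ed n × Ed n), MeasurableSet E → ∀ φ ψ : HL2 n,
    ⟪φ, P δ E ψ⟫_ℂ = (((2 * Real.pi) ^ n : ℝ) : ℂ)⁻¹ *
      ∫ z in E, (∫ y : Ed n, (starRingEnd ℂ) (coh n η δ z.1 z.2 y) * ψ y) *
        (∫ y : Ed n, (starRingEnd ℂ) (φ y) * coh n η δ z.1 z.2 y)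

/-- The "far" region of phase space: `‖x⊥‖ > n` and `‖p⊥‖ > m`. -/
def Wfar (d k : ℕ) (n m : ℝ) : Set (Ed d × Ed d) :=
  {z | n < ‖perp d k z.1‖ ∧ m < ‖perp d k z.2‖}

/-- The "surface" region of phase space: the complement of the far region. -/
def Wsur (d k : ℕ) (n m : ℝ) : Set (Ed d × Ed d) := (Wfar d k n m)ᶜ

/-- The outgoing part of the far region: `⟨x⊥, p⊥⟩ ≥ 0`. -/
def Wout (d k : ℕ) (n m : ℝ) : Set (Ed d × Ed d) :=
  {z ∈ Wfar d k n m | 0 ≤ ⟪perp d k z.1, perp d k z.2⟫_ℝ}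

/-- The incoming part of the far region: `⟨x⊥, p⊥⟩ < 0`. -/
def Win (d k : ℕ) (n m : ℝ) : Set (Ed d × Ed d) :=
  {z ∈ Wfar d k n m | ⟪perp d k z.1, perp d k z.2⟫_ℝ < 0}

/-- The seminorm `𝒩^m(ψ) = limsup_{δ→0} limsup_{n→∞} sup_{t ≥ 0} ‖P_δ(W_{n,m;far}) e^{-itH} ψ‖`. -/
def Nsup (d k : ℕ) (P : ℝ → Set (Ed d × Ed d) → (HL2 d →L[ℂ] HL2 d))
    (U : ℝ → (HL2 d →L[ℂ] HL2 d)) (m : ℝ) (ψ : HL2 d) : ℝ :=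
  limsup (fun δ : ℝ =>
    limsup (fun n : ℝ => ⨆ t : {t : ℝ // 0 ≤ t}, ‖P δ (Wfar d k n m) (U t.1 ψ)‖) atTop)
    (𝓝[>] (0 : ℝ))

/-- The seminorm `𝒩̃^m(ψ)` with `limsup_{t→∞}` in place of `sup_{t≥0}`. -/
def Nls (d k : ℕ) (P : ℝ → Set (Ed d × Ed d) → (HL2 d →L[ℂ] HL2 d))
    (U : ℝ → (HL2 d →L[ℂ] HL2 d)) (m : ℝ) (ψ : HL2 d) : ℝ :=
  limsup (fun δ : ℝ =>
    limsup (fun n : ℝ => limsup (fun t : ℝ => ‖P δ (Wfar d k n m) (U t ψ)‖) atTop) atTop)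
    (𝓝[>] (0 : ℝ))

/-- The auxiliary surface subspace `H̃_sur`. -/
def HsurTilde (d k : ℕ) (P : ℝ → Set (Ed d × Ed d) → (HL2 d →L[ℂ] HL2 d))
    (U : ℝ → (HL2 d →L[ℂ] HL2 d)) : Set (HL2 d) :=
  {ψ | ∀ m : ℝ, 0 < m → Nsup d k P U m ψ = 0}

/-- The limsup surface subspace `H_sur^limsup`. -/
def HsurLs (d k : ℕ) (P : ℝ → Set (Ed d × Ed d) → (HL2 d →L[ℂ] HL2 d))
    (U : ℝ → (HL2 d →L[ℂ] HL2 d)) : Set (HL2 d) :=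
  {ψ | ∀ m : ℝ, 0 < m → Nls d k P U m ψ = 0}

/-- The surface subspace `H_sur`: states with `‖χ_{S_{vt}} e^{-itH} ψ‖ → ‖ψ‖` for every `v > 0`. -/
def Hsur (d k : ℕ) (U : ℝ → (HL2 d →L[ℂ] HL2 d)) : Set (HL2 d) :=
  {ψ | ∀ v : ℝ, 0 < v →
    Tendsto (fun t : ℝ => ‖indLp d (Slab d k (v * t)) (slab_meas d k (v * t)) (U t ψ)‖)
      atTop (𝓝 ‖ψ‖)}

/-- The subspace `H'_sur`: states with `sup_{t≥0} ‖χ_{S_R^c} e^{-itH} ψ‖ → 0` as `R → ∞`. -/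
def HsurP (d k : ℕ) (U : ℝ → (HL2 d →L[ℂ] HL2 d)) : Set (HL2 d) :=
  {ψ | Tendsto (fun R : ℝ =>
      ⨆ t : {t : ℝ // 0 ≤ t}, ‖indLp d (Slab d k R)ᶜ (slab_meas d k R).compl (U t.1 ψ)‖)
    atTop (𝓝 0)}

end

/-!
Expanding `‖x + tξ‖²`, the cross term `2t⟨x, ξ⟩` is at worst `-(2/5) t‖x‖‖p‖` because `ξ` is
`‖p‖/5`-close to the outgoing momentum `p`, while `‖ξ‖ ≥ (4/5)‖p‖`; the resulting quadratic form
in `(‖x‖, t‖p‖)` dominates `((‖x‖ + t‖p‖)/2)²`. Shifting by `y` costs at most `r₀ ≤ n/8 < ‖x‖/8`.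
-/

section OutgoingEstimate

variable {E : Type*} [NormedAddCommGroup E] [InnerProductSpace ℝ E]

lemma neg_mul_le_inner_of_norm_sub_le {x p ξ : E} {ε : ℝ} (hxp : 0 ≤ ⟪x, p⟫_ℝ)
    (hξ : ‖ξ - p‖ ≤ ε) : -(‖x‖ * ε) ≤ ⟪x, ξ⟫_ℝ := by
  have hsplit : ⟪x, ξ⟫_ℝ = ⟪x, p⟫_ℝ + ⟪x, ξ - p⟫_ℝ := by
    rw [← inner_add_right, add_sub_cancel]
  have hpert : -(‖x‖ * ε) ≤ ⟪x, ξ - p⟫_ℝ :=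
    (neg_le_neg (mul_le_mul_of_nonneg_left hξ (norm_nonneg x))).trans
      (neg_le_of_abs_le (abs_real_inner_le_norm x (ξ - p)))
  linarith

lemma half_add_le_norm_add_smul {x ξ : E} {c t : ℝ} (hc : 0 ≤ c) (ht : 0 ≤ t)
    (hinner : -(‖x‖ * c) / 5 ≤ ⟪x, ξ⟫_ℝ) (hξ : 4 / 5 * c ≤ ‖ξ‖) :
    (‖x‖ + t * c) / 2 ≤ ‖x + t • ξ‖ := by
  have hexpand : ‖x + t • ξ‖ ^ 2 = ‖x‖ ^ 2 + 2 * (t * ⟪x, ξ⟫_ℝ) + (t * ‖ξ‖) ^ 2 := by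
    rw [norm_add_sq_real, inner_smul_right, norm_smul, Real.norm_of_nonneg ht]
  have hcross : -(‖x‖ * (t * c)) / 5 ≤ t * ⟪x, ξ⟫_ℝ := by nlinarith
  have hlong : 4 / 5 * (t * c) ≤ t * ‖ξ‖ := by nlinarith
  have hsq : ((‖x‖ + t * c) / 2) ^ 2 ≤ ‖x + t • ξ‖ ^ 2 := by
    nlinarith [sq_nonneg (‖x‖ - 3 / 5 * (t * c)), mul_nonneg ht hc]
  exact le_of_pow_le_pow_left₀ two_ne_zero (norm_nonneg _) hsq

end OutgoingEstimate

theorem stmt_5_general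
    (ν : ℕ) (r₀ m n δ : ℝ)
    (hn : 8 * r₀ ≤ n) (hδ : δ < m / 10)
    (x p : EuclideanSpace ℝ (Fin ν)) (hx : n < ‖x‖) (hp : m < ‖p‖)
    (hxp : 0 ≤ ⟪x, p⟫_ℝ) (t : ℝ) (ht : 0 ≤ t)
    (y ξ : EuclideanSpace ℝ (Fin ν)) (hy : ‖y‖ ≤ r₀) (hξ : ‖ξ - p‖ ≤ 2 * δ) :
    (1 / 16 : ℝ) * (‖x‖ + n + t * ‖p‖) ≤ ‖x + t • ξ - y‖ := by
  have hξp : ‖ξ - p‖ ≤ ‖p‖ / 5 := by linarith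
  have hinner : -(‖x‖ * ‖p‖) / 5 ≤ ⟪x, ξ⟫_ℝ := by
    have := neg_mul_le_inner_of_norm_sub_le hxp hξp
    linarith
  have hlong : 4 / 5 * ‖p‖ ≤ ‖ξ‖ := by
    linarith [norm_sub_norm_le p ξ, norm_sub_rev p ξ]
  have hhalf := half_add_le_norm_add_smul (norm_nonneg p) ht hinner hlong
  have hshift := norm_sub_norm_le (x + t • ξ) y
  linarith [mul_nonneg ht (norm_nonneg p), norm_nonneg y]

/-- Geometric outgoing estimate. -/
theorem stmt_5
    (ν : ℕ) (hν : 1 ≤ ν) (r₀ m n δ : ℝ) (hr₀ : 0 < r₀) (hm : 0 < m)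
    (hn : 8 * r₀ ≤ n) (hδ0 : 0 < δ) (hδ : δ < m / 10)
    (x p : EuclideanSpace ℝ (Fin ν)) (hx : n < ‖x‖) (hp : m < ‖p‖)
    (hxp : 0 ≤ ⟪x, p⟫_ℝ) (t : ℝ) (ht : 0 ≤ t)
    (y ξ : EuclideanSpace ℝ (Fin ν)) (hy : ‖y‖ ≤ r₀) (hξ : ‖ξ - p‖ ≤ 2 * δ) :
    (1 / 16 : ℝ) * (‖x‖ + n + t * ‖p‖) ≤ ‖x + t • ξ - y‖ :=
  stmt_5_general ν r₀ m n δ hn hδ x p hx hp hxp t ht y ξ hy hξ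
end

section
/- Pullback of limsup-surface states under the wave operator: if ψ ∈ Ran(Ω⁻) ∩ H_sur^limsup(H), then there exists φ ∈ H_sur^limsup(H₀) such that Ω⁻φ = ψ. -/
open MeasureTheory Filter Complex SchwartzMap
open scoped Topology ENNReal NNReal

/-
The wave operator intertwines the dynamics asymptotically: `‖e^{-itH} Ω⁻φ - e^{-itH₀} φ‖ → 0`.
Phase-space observables are bounded operators, so `‖P_δ(W) e^{-itH} Ω⁻φ‖` and
`‖P_δ(W) e^{-itH₀} φ‖` differ by a term tending to zero as `t → ∞`; hence their `limsup`s in `t`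
agree, and so do the seminorms `𝒩̃^m(Ω⁻φ)` for `H` and `𝒩̃^m(φ)` for `H₀`.
-/

lemma Filter.limsup_eq_of_tendsto_sub {ι : Type*} {l : Filter ι} [l.NeBot] {a b : ι → ℝ}
    (ha_le : IsBoundedUnder (· ≤ ·) l a) (ha_ge : IsBoundedUnder (· ≥ ·) l a)
    (hba : Tendsto (b - a) l (𝓝 0)) :
    limsup b l = limsup a l := by
  have hb : b = a + (b - a) := by abel
  have hba_le : IsBoundedUnder (· ≤ ·) l (b - a) := hba.isBoundedUnder_le
  have hba_ge : IsBoundedUnder (· ≥ ·) l (b - a) := hba.isBoundedUnder_ge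
  apply le_antisymm
  · calc limsup b l = limsup (a + (b - a)) l := by rw [← hb]
      _ ≤ limsup a l + limsup (b - a) l :=
          limsup_add_le ha_ge ha_le hba_ge.isCoboundedUnder_le hba_le
      _ = limsup a l := by rw [hba.limsup_eq, add_zero]
  · calc limsup a l = limsup a l + liminf (b - a) l := by rw [hba.liminf_eq, add_zero]
      _ ≤ limsup (a + (b - a)) l :=
          le_limsup_add ha_le ha_ge.isCoboundedUnder_le hba_le hba_ge
      _ = limsup b l := by rw [← hb]

lemma ContinuousLinearMap.limsup_norm_apply_eq_of_tendsto_sub {ι 𝕜 E F : Type*}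
    [NontriviallyNormedField 𝕜] [SeminormedAddCommGroup E] [NormedSpace 𝕜 E]
    [SeminormedAddCommGroup F] [NormedSpace 𝕜 F] {l : Filter ι} [l.NeBot]
    (T : E →L[𝕜] F) {x y : ι → E} {C : ℝ} (hx : ∀ i, ‖x i‖ ≤ C)
    (hyx : Tendsto (fun i => y i - x i) l (𝓝 0)) :
    limsup (fun i => ‖T (y i)‖) l = limsup (fun i => ‖T (x i)‖) l := by
  have hTx : ∀ i, ‖T (x i)‖ ≤ ‖T‖ * C := fun i =>
    (T.le_opNorm _).trans (mul_le_mul_of_nonneg_left (hx i) (norm_nonneg T))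
  refine limsup_eq_of_tendsto_sub (isBoundedUnder_of ⟨_, hTx⟩)
    (isBoundedUnder_of ⟨0, fun i => norm_nonneg _⟩) ?_
  have hT : Tendsto (fun i => ‖T (y i - x i)‖) l (𝓝 0) := by
    simpa using ((T.continuous.tendsto 0).comp hyx).norm
  refine squeeze_zero_norm (fun i => ?_) hT
  simpa [map_sub] using abs_norm_sub_norm_le (T (y i)) (T (x i))

namespace IsUnitaryGroup

variable {n : ℕ} {U : ℝ → (HL2 n →L[ℂ] HL2 n)}

lemma norm_apply (hU : IsUnitaryGroup n U) (t : ℝ) (ψ : HL2 n) : ‖U t ψ‖ = ‖ψ‖ :=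
  hU.2.2.1 t ψ

lemma apply_apply_neg (hU : IsUnitaryGroup n U) (t : ℝ) (ψ : HL2 n) : U t (U (-t) ψ) = ψ := by
  obtain ⟨h0, hmul, -, -⟩ := hU
  simpa [h0] using (congrArg (fun A : HL2 n →L[ℂ] HL2 n => A ψ) (hmul t (-t))).symm

lemma tendsto_apply_sub_of_tendsto_neg_apply (hU : IsUnitaryGroup n U) {f : ℝ → HL2 n}
    {ψ : HL2 n} (hf : Tendsto (fun t => U (-t) (f t)) atTop (𝓝 ψ)) :
    Tendsto (fun t => U t ψ - f t) atTop (𝓝 0) := by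
  have hnorm : ∀ t, ‖U t ψ - f t‖ = ‖U (-t) (f t) - ψ‖ := fun t => by
    conv_lhs => rw [← hU.apply_apply_neg t (f t), ← map_sub]
    rw [hU.norm_apply, norm_sub_rev]
  rw [tendsto_zero_iff_norm_tendsto_zero]
  simpa only [hnorm] using tendsto_iff_norm_sub_tendsto_zero.1 hf

end IsUnitaryGroup

lemma Nls_eq_of_tendsto_sub {d k : ℕ} {P : ℝ → Set (Ed d × Ed d) → (HL2 d →L[ℂ] HL2 d)}
    {U₀ U : ℝ → (HL2 d →L[ℂ] HL2 d)} (hU₀ : IsUnitaryGroup d U₀) {φ ψ : HL2 d}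
    (h : Tendsto (fun t => U t ψ - U₀ t φ) atTop (𝓝 0)) (m : ℝ) :
    Nls d k P U m ψ = Nls d k P U₀ m φ := by
  simp only [Nls, (P _ _).limsup_norm_apply_eq_of_tendsto_sub (fun t => (hU₀.norm_apply t φ).le) h]

theorem stmt_9_general
    (d k : ℕ)
    (V : Ed d → ℝ)
    (U₀ U : ℝ → (HL2 d →L[ℂ] HL2 d))
    (hU₀ : IsFreeSchrodingerGroup d U₀) (hU : IsSchrodingerGroup d V U)
    (P : ℝ → Set (Ed d × Ed d) → (HL2 d →L[ℂ] HL2 d))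
    (Ωm : HL2 d →L[ℂ] HL2 d)
    (hΩm : ∀ ψ : HL2 d, Tendsto (fun t : ℝ => U (-t) (U₀ t ψ)) atTop (𝓝 (Ωm ψ))) :
    ∀ ψ : HL2 d, ψ ∈ Set.range Ωm → ψ ∈ HsurLs d k P U →
      ∃ φ ∈ HsurLs d k P U₀, Ωm φ = ψ := by
  rintro ψ ⟨φ, rfl⟩ hψ
  have hasymp := hU.1.tendsto_apply_sub_of_tendsto_neg_apply (hΩm φ)
  exact ⟨φ, fun m hm => Nls_eq_of_tendsto_sub hU₀.1 hasymp m ▸ hψ m hm, rfl⟩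

/-- Pullback of limsup-surface states under the wave operator. -/
theorem stmt_9
    (d k : ℕ) (hd : 2 ≤ d) (hk : 1 ≤ k) (hkd : k < d)
    (V : Ed d → ℝ) (M r₀ : ℝ) (hr₀ : 0 < r₀) (hVmeas : Measurable V)
    (hM : ∀ x : Ed d, |V x| ≤ M) (hVsupp : Function.support V ⊆ Slab d k r₀)
    (U₀ U : ℝ → (HL2 d →L[ℂ] HL2 d))
    (hU₀ : IsFreeSchrodingerGroup d U₀) (hU : IsSchrodingerGroup d V U)
    (η : 𝓢(Ed d, ℂ)) (hη : GoodEta d η)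
    (ηpar : 𝓢(Ed k, ℂ)) (ηperp : 𝓢(Ed (d - k), ℂ))
    (hsplit : ∀ x : Ed d, η x = ηpar (para d k hkd.le x) * ηperp (perp d k x))
    (P : ℝ → Set (Ed d × Ed d) → (HL2 d →L[ℂ] HL2 d)) (hP : IsPhaseObs d η P)
    (Ωm : HL2 d →L[ℂ] HL2 d)
    (hΩm : ∀ ψ : HL2 d, Tendsto (fun t : ℝ => U (-t) (U₀ t ψ)) atTop (𝓝 (Ωm ψ))) :
    ∀ ψ : HL2 d, ψ ∈ Set.range Ωm → ψ ∈ HsurLs d k P U →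
      ∃ φ ∈ HsurLs d k P U₀, Ωm φ = ψ :=
  stmt_9_general d k V U₀ U hU₀ hU P Ωm hΩm
end
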